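/- arXiv:2509.09745 — 5 statements merged into one kernel-verified Lean document; each statement's English description precedes it below -/
import Mathlib

section
/- The sequence b defined by b(-1)=0, b(0)=1, and b(n)=(n+2)(b(n-1)-b(n-2)) for n≥1 satisfies b(n) = (n+2) · (∑_{k=0}^{n} k!) / 2 for all n ≥ 0; equivalently, 2·b(n) = (n+2) · ∑_{k=0}^{n} k! for all n ≥ 0. -/
/-- Shifted sequence: `B 0` is the paper's `b(-1) = 0`, `B 1` is `b(0) = 1`,
and `B (n+2) = (n+3) * (B (n+1) - B n)` corresponds to `b(n) = (n+2)(b(n-1) - b(n-2))`. -/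
def B : ℕ → ℤ
  | 0 => 0
  | 1 => 1
  | (n + 2) => (n + 3) * (B (n + 1) - B n)

/-! Writing `S n = ∑_{k ≤ n} k!`, the identity `(n + 3)(n + 1)! = (n + 1)! + (n + 2)!` gives
`S (n + 2) = (n + 3) S (n + 1) - (n + 2) S n`, so `(n + 2) S n` obeys the recurrence defining `2 b(n)`
and agrees with it at `n = 0, 1`. -/

open Finset Nat

theorem sum_range_factorial_add_mul (n : ℕ) :
    ∑ k ∈ range (n + 3), k ! + (n + 2) * ∑ k ∈ range (n + 1), k ! =
      (n + 3) * ∑ k ∈ range (n + 2), k ! := by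
  simp only [sum_range_succ _ (n + 2), sum_range_succ _ (n + 1), factorial_succ (n + 1)]
  ring

theorem b_eq_left_factorial (n : ℕ) :
    2 * B (n + 1) = (n + 2) * ∑ k ∈ Finset.range (n + 1), (Nat.factorial k : ℤ) := by
  induction n using Nat.twoStepInduction with
  | zero => simp [B]
  | one => simp [B, sum_range_succ]
  | more n ih₁ ih₂ =>
    have hsum := congrArg (Nat.cast : ℕ → ℤ) (sum_range_factorial_add_mul n)
    rw [B]
    push_cast at ih₁ ih₂ hsum ⊢
    linear_combination ((n : ℤ) + 4) * (ih₂ - ih₁ - hsum)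
end

section
/- For the sequence b with b(-1)=0, b(0)=1, b(n)=(n+2)(b(n-1)-b(n-2)), and for every integer n ≥ 3, gcd(n² − n − 1, b(n−3) + n·b(n−4)) = gcd(n² − n − 1, (n−1)!). -/
open Finset Nat

theorem IsCoprime.dvd_of_mul_eq_add {m a b u v s d : ℤ} (hu : IsCoprime m u)
    (h : u * a = m * s + v * b) (hdm : d ∣ m) (hdb : d ∣ b) : d ∣ a :=
  (hu.of_isCoprime_of_dvd_left hdm).dvd_of_dvd_mul_left
    (h ▸ dvd_add (hdm.mul_right s) (hdb.mul_left v))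

theorem Int.gcd_eq_gcd_of_mul_eq_add {m a b u v s : ℤ} (hu : IsCoprime m u) (hv : IsCoprime m v)
    (h : u * a = m * s + v * b) : m.gcd a = m.gcd b := by
  have h' : v * b = m * -s + u * a := by rw [h]; ring
  apply Nat.dvd_antisymm <;> apply Int.natCast_dvd_natCast.mp
  · exact Int.dvd_coe_gcd (Int.gcd_dvd_left m a)
      (hv.dvd_of_mul_eq_add h' (Int.gcd_dvd_left m a) (Int.gcd_dvd_right m a))
  · exact Int.dvd_coe_gcd (Int.gcd_dvd_left m b)
      (hu.dvd_of_mul_eq_add h (Int.gcd_dvd_left m b) (Int.gcd_dvd_right m b))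

theorem two_mul_B : ∀ k : ℕ,
    2 * B k = (k + 1) * ∑ i ∈ range (k + 2), (i ! : ℤ) - (k + 2) * (k + 1)!
  | 0 => by simp [B, sum_range_succ]
  | 1 => by simp [B, sum_range_succ]
  | k + 2 => by
    rw [B, mul_left_comm, mul_sub, two_mul_B (k + 1), two_mul_B k]
    simp only [sum_range_succ _ (k + 3), sum_range_succ _ (k + 2), factorial_succ]
    push_cast
    ring

theorem two_mul_B_add_mul_B (k : ℕ) :
    2 * (B (k + 1) + (k + 3) * B k) =
      ((k + 3) ^ 2 - (k + 3) - 1) * ∑ i ∈ range (k + 2), (i ! : ℤ) - (k + 4) * (k + 2)! := by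
  rw [mul_add, mul_left_comm, two_mul_B, two_mul_B, sum_range_succ _ (k + 2),
    factorial_succ (k + 1)]
  push_cast
  ring

theorem Int.odd_sq_sub_self_sub_one (n : ℤ) : Odd (n ^ 2 - n - 1) := by
  have h : n ^ 2 - n = n * (n - 1) := by ring
  exact (h ▸ Int.even_mul_pred_self n).sub_odd odd_one

/-- For n ≥ 3, gcd(n² − n − 1, b(n−3) + n·b(n−4)) = gcd(n² − n − 1, (n−1)!),
where b(n−3) = B(n−2) and b(n−4) = B(n−3) in the shifted indexing. -/
theorem gcd_b_eq_gcd_factorial (n : ℕ) (hn : 3 ≤ n) :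
    Int.gcd ((n : ℤ)^2 - n - 1) (B (n - 2) + (n : ℤ) * B (n - 3)) =
      Int.gcd ((n : ℤ)^2 - n - 1) ((Nat.factorial (n - 1) : ℤ)) := by
  obtain ⟨k, rfl⟩ : ∃ k, n = k + 3 := ⟨n - 3, by omega⟩
  rw [show k + 3 - 2 = k + 1 by omega, show k + 3 - 3 = k by omega,
    show k + 3 - 1 = k + 2 by omega]
  push_cast
  have hodd : IsCoprime ((k + 3 : ℤ) ^ 2 - (k + 3) - 1) 2 :=
    Int.isCoprime_two_right.mpr (Int.odd_sq_sub_self_sub_one _)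
  have hsucc : IsCoprime ((k + 3 : ℤ) ^ 2 - (k + 3) - 1) (-(k + 4 : ℤ)) :=
    ⟨1, k + 1, by ring⟩
  exact Int.gcd_eq_gcd_of_mul_eq_add (s := ∑ i ∈ range (k + 2), (i ! : ℤ)) hodd hsucc
    (by rw [two_mul_B_add_mul_B]; ring)
end

section
/- For every integer n ≥ 3, the quotient a(n) = (n² − n − 1)/gcd(n² − n − 1, (n−1)!) is either equal to 1 or is a prime number. -/
def a (n : ℕ) : ℕ := (n^2 - n - 1) / Nat.gcd (n^2 - n - 1) (Nat.factorial (n - 1))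

private lemma pow_dvd_fact {p : ℕ} (hp : 0 < p) : ∀ e, p ^ e ∣ Nat.factorial (p * e)
  | 0 => by simp
  | (k+1) => by
    have hm : p * (k+1) = (p * k + (p-1)) + 1 := by
      cases p with
      | zero => omega
      | succ q => ring_nf; omega
    have h1 : p ^ k ∣ (p * k + (p-1)).factorial :=
      (pow_dvd_fact hp k).trans (Nat.factorial_dvd_factorial (by omega))
    have h2 : p ∣ (p * k + (p - 1)) + 1 := ⟨k + 1, by omega⟩
    calc p ^ (k+1) = p ^ k * p := pow_succ p k
    _ ∣ (p * k + (p-1)).factorial * ((p*k+(p-1))+1) := mul_dvd_mul h1 h2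
    _ = ((p*k+(p-1))+1).factorial := by rw [Nat.factorial_succ, Nat.mul_comm]
    _ = (p*(k+1)).factorial := by rw [← hm]

private lemma hmn_lemma (n : ℕ) (hn : 3 ≤ n) : (n^2 - n - 1) + (n + 1) = n^2 := by
  have h2 : n + 1 < n ^ 2 := by nlinarith
  generalize hs : n ^ 2 = s at *
  omega

private lemma mod_lemma (k n : ℕ) (h : ∀ x : ZMod k, x^2 ≠ x + 1)
    (hmn : (n^2 - n - 1) + (n + 1) = n^2) : ¬ (k ∣ n^2 - n - 1) := by
  intro hd
  have h0 : ((n^2 - n - 1 : ℕ) : ZMod k) = 0 :=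
    (ZMod.natCast_eq_zero_iff _ _).mpr hd
  have hc := congrArg (fun t : ℕ => (t : ZMod k)) hmn
  push_cast at hc
  rw [h0] at hc
  exact h n (by rw [← hc, zero_add])

private lemma aux11 : ∀ k : ℕ, (k+3)^2 ≤ 11^(k+1) := by
  intro k
  induction k with
  | zero => norm_num
  | succ j ih =>
    calc (j+1+3)^2 = (j+4)^2 := by ring
    _ ≤ 11 * (j+3)^2 := by nlinarith [sq_nonneg j, Nat.zero_le j]
    _ ≤ 11 * 11^(j+1) := Nat.mul_le_mul_left _ ih
    _ = 11^(j+1+1) := by ring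

private lemma small (n p : ℕ) (hn : 3 ≤ n) (hp : p.Prime) (hpn : p < n) :
    p ^ ((n^2 - n - 1).factorization p) ∣ Nat.factorial (n - 1) := by
  have hmn : (n^2 - n - 1) + (n + 1) = n^2 := hmn_lemma n hn
  set m := n^2 - n - 1 with hmdef
  set e := m.factorization p with he
  rcases Nat.eq_zero_or_pos e with h0 | hpos
  · rw [h0]; simp
  have hm0 : m ≠ 0 := by
    intro h
    rw [h] at hmn
    nlinarith
  have hordm : p ^ e ∣ m := Nat.ordProj_dvd m p
  have hpm : p ∣ m := (dvd_pow_self p hpos.ne').trans hordm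
  have h2 : ¬ (2 ∣ m) := mod_lemma 2 n (by decide) hmn
  have h3 : ¬ (3 ∣ m) := mod_lemma 3 n (by decide) hmn
  have h7 : ¬ (7 ∣ m) := mod_lemma 7 n (by decide) hmn
  have h25 : ¬ (25 ∣ m) := mod_lemma 25 n (by decide) hmn
  have hpe : p * e ≤ n - 1 := by
    by_contra hcon
    push_neg at hcon
    have hne : n ≤ p * e := by omega
    have hple : p ^ e ≤ m := Nat.le_of_dvd (Nat.pos_of_ne_zero hm0) hordm
    have hmlt : m < n ^ 2 := by omega
    have hp511 : p = 5 ∨ 11 ≤ p := by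
      have h2p := hp.two_le
      by_contra hq
      push_neg at hq
      obtain ⟨hq5, hq11⟩ := hq
      interval_cases p
      · exact h2 hpm
      · exact h3 hpm
      · exact absurd hp (by decide)
      · exact hq5 rfl
      · exact absurd hp (by decide)
      · exact h7 hpm
      · exact absurd hp (by decide)
      · exact absurd hp (by decide)
      · exact absurd hp (by decide)
    have he2 : 2 ≤ e := by
      by_contra hle
      push_neg at hle
      have he1 : e = 1 := by omega
      rw [he1, mul_one] at hcon
      omega
    rcases hp511 with rfl | hp11
    · exact h25 (dvd_trans (by calc (25:ℕ) = 5^2 := by norm_num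
                                 _ ∣ 5^e := pow_dvd_pow 5 he2) hordm)
    · rcases Nat.lt_or_ge e 3 with he3 | he3
      · -- e = 2
        have he2' : e = 2 := by omega
        rw [he2'] at hordm hple hne
        obtain ⟨c, hc⟩ := hordm
        have hc1 : 1 ≤ c := by
          rcases Nat.eq_zero_or_pos c with rfl | h
          · simp at hc; exact absurd hc hm0
          · exact h
        have hn2p : n ^ 2 ≤ (p * 2) ^ 2 := Nat.pow_le_pow_left hne 2
        have hclt : c ≤ 3 := by nlinarith
        interval_cases c
        · -- c = 1 : m = p^2 but (n-1)^2 < m and p ≤ n-1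
          rw [mul_one] at hc
          have hple' : p ≤ n - 1 := by omega
          have hpsq : p ^ 2 ≤ (n-1) ^ 2 := Nat.pow_le_pow_left hple' 2
          have key1 : (n-1)^2 + n + 2 ≤ n^2 := by
            obtain ⟨k, rfl⟩ : ∃ k, n = k + 3 := ⟨n - 3, by omega⟩
            rw [show k + 3 - 1 = k + 2 from rfl]
            nlinarith
          linarith
        · exact h2 ⟨p^2, by rw [hc]; ring⟩
        · exact h3 ⟨p^2, by rw [hc]; ring⟩
      · -- e ≥ 3, p ≥ 11
        have h1 : e ^ 2 ≤ 11 ^ (e - 2) := by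
          obtain ⟨k, hk⟩ : ∃ k, e = k + 3 := ⟨e - 3, by omega⟩
          rw [hk, show k + 3 - 2 = k + 1 from rfl]
          exact aux11 k
        have h2' : (11:ℕ) ^ (e-2) ≤ p ^ (e-2) := Nat.pow_le_pow_left hp11 _
        have h3' : p ^ 2 * p ^ (e-2) = p ^ e := by
          rw [← pow_add]; congr 1; omega
        have h4' : n ^ 2 ≤ (p * e) ^ 2 := Nat.pow_le_pow_left hne 2
        have h5' : (p * e) ^ 2 ≤ p ^ e := by
          calc (p*e)^2 = p^2 * e^2 := by ring
          _ ≤ p^2 * 11^(e-2) := Nat.mul_le_mul_left _ h1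
          _ ≤ p^2 * p^(e-2) := Nat.mul_le_mul_left _ h2'
          _ = p^e := h3'
        linarith
  exact (pow_dvd_fact hp.pos e).trans (Nat.factorial_dvd_factorial (by omega))

theorem a_one_or_prime (n : ℕ) (hn : 3 ≤ n) : a n = 1 ∨ (a n).Prime := by
  by_contra hcon
  push_neg at hcon
  obtain ⟨h1, h2⟩ := hcon
  have hmn : (n^2 - n - 1) + (n + 1) = n^2 := hmn_lemma n hn
  have hm0 : 0 < n^2 - n - 1 := by
    have hx : n + 1 < n^2 := by nlinarith
    omega
  have hg : Nat.gcd (n^2 - n - 1) (Nat.factorial (n-1)) ∣ (n^2 - n - 1) :=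
    Nat.gcd_dvd_left _ _
  have hg0 : 0 < Nat.gcd (n^2 - n - 1) (Nat.factorial (n-1)) :=
    Nat.gcd_pos_of_pos_left _ hm0
  have ha_mul : a n * Nat.gcd (n^2 - n - 1) (Nat.factorial (n-1)) = n^2 - n - 1 :=
    Nat.div_mul_cancel hg
  have ha0 : 0 < a n := Nat.div_pos (Nat.le_of_dvd hm0 hg) hg0
  have hp : (a n).minFac.Prime := Nat.minFac_prime h1
  have hpa : (a n).minFac ∣ a n := Nat.minFac_dvd _
  have hnp : n ≤ (a n).minFac := by
    by_contra hlt
    push_neg at hlt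
    have hkey := small n (a n).minFac hn hp hlt
    have hordm : (a n).minFac ^ ((n^2 - n - 1).factorization (a n).minFac) ∣ (n^2 - n - 1) :=
      Nat.ordProj_dvd _ _
    have hpg : (a n).minFac ^ ((n^2 - n - 1).factorization (a n).minFac) ∣
        Nat.gcd (n^2 - n - 1) (Nat.factorial (n-1)) := Nat.dvd_gcd hordm hkey
    have hd : (a n).minFac * (a n).minFac ^ ((n^2 - n - 1).factorization (a n).minFac) ∣
        a n * Nat.gcd (n^2 - n - 1) (Nat.factorial (n-1)) := mul_dvd_mul hpa hpg
    rw [ha_mul] at hd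
    exact (Nat.pow_succ_factorization_not_dvd hm0.ne' hp) (by rw [pow_succ']; exact hd)
  have hsq : (a n).minFac ^ 2 ≤ a n := Nat.minFac_sq_le_self ha0 h2
  have hn2 : n ^ 2 ≤ a n := le_trans (Nat.pow_le_pow_left hnp 2) hsq
  have ham : a n ≤ n^2 - n - 1 := Nat.le_of_dvd hm0 ⟨_, ha_mul.symm⟩
  omega
end

section
/- For every integer n ≥ 3, if a(n) ≠ 1 then a(n) > n, where a(n) = (n² − n − 1)/gcd(n² − n − 1, (n−1)!). -/
open Nat

lemma sq_sub_sub_one_add_add_one {n : ℕ} (hn : 2 ≤ n) : n ^ 2 - n - 1 + n + 1 = n ^ 2 := by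
  have : n + 1 ≤ n ^ 2 := by nlinarith
  omega

lemma sq_sub_sub_one_ne_zero {n : ℕ} (hn : 2 ≤ n) : n ^ 2 - n - 1 ≠ 0 := by
  have := sq_sub_sub_one_add_add_one hn
  nlinarith

lemma coprime_sq_sub_sub_one_self {n : ℕ} (hn : 2 ≤ n) : Coprime (n ^ 2 - n - 1) n := by
  have hd : Nat.gcd (n ^ 2 - n - 1) n ∣ n ^ 2 - n - 1 + n + 1 := by
    rw [sq_sub_sub_one_add_add_one hn]
    exact (Nat.gcd_dvd_right _ _).pow two_ne_zero
  exact Nat.dvd_one.mp <| (Nat.dvd_add_right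
    (dvd_add (Nat.gcd_dvd_left _ _) (Nat.gcd_dvd_right _ _))).mp hd

lemma not_dvd_sq_sub_sub_one {d n : ℕ} (hn : 2 ≤ n) (hd : ∀ x : ZMod d, x ^ 2 - x - 1 ≠ 0) :
    ¬ d ∣ n ^ 2 - n - 1 := by
  intro hdvd
  have hzero := (ZMod.natCast_eq_zero_iff _ d).mpr hdvd
  have hsum := congrArg (Nat.cast : ℕ → ZMod d) (sq_sub_sub_one_add_add_one hn)
  push_cast at hsum
  exact hd n (by linear_combination hzero - hsum)

lemma eleven_le_of_sq_dvd_sq_sub_sub_one {n p : ℕ} (hn : 2 ≤ n) (hp : p.Prime)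
    (h : p ^ 2 ∣ n ^ 2 - n - 1) : 11 ≤ p := by
  have hpm : p ∣ n ^ 2 - n - 1 := (dvd_pow_self p two_ne_zero).trans h
  by_contra! hp11
  interval_cases p <;> norm_num at hp
  · exact not_dvd_sq_sub_sub_one hn (by decide) hpm
  · exact not_dvd_sq_sub_sub_one hn (by decide) hpm
  · exact not_dvd_sq_sub_sub_one hn (by decide) h
  · exact not_dvd_sq_sub_sub_one hn (by decide) hpm

lemma div_le_factorization_factorial {p : ℕ} (hp : p.Prime) (N : ℕ) :
    N / p ≤ (N !).factorization p := by
  have := Fact.mk hp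
  rw [factorization_def _ hp, ← padicValNat_mul_div_factorial, padicValNat_factorial_mul]
  exact Nat.le_add_left _ _

lemma div_gcd_ne_zero {m : ℕ} (hm : m ≠ 0) (k : ℕ) : m / Nat.gcd m k ≠ 0 :=
  (Nat.div_pos (Nat.gcd_le_left k hm.bot_lt) (Nat.gcd_pos_of_pos_left k hm.bot_lt)).ne'

lemma factorization_lt_of_prime_dvd_div_gcd {m k q : ℕ} (hm : m ≠ 0) (hk : k ≠ 0)
    (hq : q.Prime) (h : q ∣ m / Nat.gcd m k) : k.factorization q < m.factorization q := by
  have hpos := hq.factorization_pos_of_dvd (div_gcd_ne_zero hm k) h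
  rw [factorization_div (Nat.gcd_dvd_left m k), Finsupp.tsub_apply, factorization_gcd hm hk,
    Finsupp.inf_apply] at hpos
  exact lt_of_not_ge fun hle => by simp [inf_eq_left.mpr hle] at hpos

lemma add_three_sq_le_nine_pow_succ (t : ℕ) : (t + 3) ^ 2 ≤ 9 ^ (t + 1) := by
  have h3 : t + 3 ≤ 3 ^ (t + 1) := by
    have := Nat.lt_pow_self (n := t) (by norm_num : 1 < 3)
    rw [pow_succ]; omega
  calc (t + 3) ^ 2 ≤ (3 ^ (t + 1)) ^ 2 := Nat.pow_le_pow_left h3 2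
    _ = 9 ^ (t + 1) := by rw [← pow_mul, mul_comm, pow_mul]; norm_num

theorem factorization_sq_sub_sub_one_le_factorial {n p : ℕ} (hp : p.Prime) (hpn : p < n) :
    (n ^ 2 - n - 1).factorization p ≤ (n - 1)!.factorization p := by
  have hn : 2 ≤ n := hp.two_le.trans hpn.le
  set m := n ^ 2 - n - 1
  have hm : m + n + 1 = n ^ 2 := sq_sub_sub_one_add_add_one hn
  have hm0 : m ≠ 0 := sq_sub_sub_one_ne_zero hn
  refine le_trans ?_ (div_le_factorization_factorial hp (n - 1))
  by_contra! hsk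
  have hs1 : 1 ≤ (n - 1) / p := (Nat.le_div_iff_mul_le hp.pos).mpr (by omega)
  have hn_le : n ≤ ((n - 1) / p + 1) * p := by
    have := Nat.lt_mul_div_succ (n - 1) hp.pos
    rw [mul_comm]; omega
  generalize (n - 1) / p = s at hsk hs1 hn_le
  have hsq : p ^ 2 ∣ m := (pow_dvd_pow p (by omega)).trans (ordProj_dvd m p)
  have hpow : p ^ (s + 1) ≤ m :=
    Nat.le_of_dvd hm0.bot_lt ((pow_dvd_pow p hsk).trans (ordProj_dvd m p))
  have hm_lt : m < (s + 1) ^ 2 * p ^ 2 := by nlinarith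
  obtain rfl | ⟨t, rfl⟩ : s = 1 ∨ ∃ t, s = t + 2 :=
    hs1.eq_or_lt.imp Eq.symm fun h => ⟨s - 2, by omega⟩
  · obtain ⟨c, hc⟩ := hsq
    have hn3 : 3 ≤ n := by have := hp.two_le; omega
    have hc1 : 1 < c := by nlinarith
    have hc4 : c < 4 := by nlinarith
    interval_cases c
    · exact not_dvd_sq_sub_sub_one (d := 2) hn (by decide) ⟨p ^ 2, hc.trans (mul_comm _ _)⟩
    · exact not_dvd_sq_sub_sub_one (d := 3) hn (by decide) ⟨p ^ 2, hc.trans (mul_comm _ _)⟩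
  · have hp11 := eleven_le_of_sq_dvd_sq_sub_sub_one hn hp hsq
    have : (t + 2 + 1) ^ 2 * p ^ 2 ≤ p ^ (t + 2 + 1) := calc
      (t + 2 + 1) ^ 2 * p ^ 2 ≤ 9 ^ (t + 1) * p ^ 2 := Nat.mul_le_mul_right _ (add_three_sq_le_nine_pow_succ t)
      _ ≤ p ^ (t + 1) * p ^ 2 := Nat.mul_le_mul_right _ (Nat.pow_le_pow_left (by omega) _)
      _ = p ^ (t + 2 + 1) := by ring
    exact (hpow.trans_lt hm_lt).not_ge this

theorem a_gt_n_of_ne_one (n : ℕ) (hn : 3 ≤ n) (h : a n ≠ 1) : n < a n := by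
  have hm : n ^ 2 - n - 1 ≠ 0 := sq_sub_sub_one_ne_zero (by omega)
  obtain ⟨q, hq, hqa⟩ := Nat.exists_prime_and_dvd h
  have hqm : q ∣ n ^ 2 - n - 1 := hqa.trans (Nat.div_dvd_of_dvd (Nat.gcd_dvd_left _ _))
  have hnq : n < q := by
    by_contra! hqn
    have hq_ne : q ≠ n := fun hq_eq => hq.one_lt.ne' <|
      eq_one_of_dvd_coprimes (coprime_sq_sub_sub_one_self (by omega)) hqm (hq_eq ▸ dvd_rfl)
    exact (factorization_lt_of_prime_dvd_div_gcd hm (factorial_ne_zero _) hq hqa).not_ge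
      (factorization_sq_sub_sub_one_le_factorial hq (lt_of_le_of_ne hqn hq_ne))
  exact hnq.trans_le (Nat.le_of_dvd (div_gcd_ne_zero hm _).bot_lt hqa)
end

section
/- For any sequence (a_i) of integers satisfying a_i = (i+1)·a_{i+1} − (i+2)·a_{i+2} for 1 ≤ i ≤ n−1, and with b defined by b(−1)=0, b(0)=1, b(k)=(k+2)(b(k−1)−b(k−2)), one has a_2 = b(n−3)·a_{n−1} − n·b(n−4)·a_n for all n ≥ 4. -/
/-- a₂ = b(n−3)·a_{n−1} − n·b(n−4)·a_n, with b(n−3) = B(n−2), b(n−4) = B(n−3). -/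
theorem a_two_formula (n : ℕ) (hn : 4 ≤ n) (a : ℕ → ℤ)
    (hrec : ∀ i : ℕ, 1 ≤ i → i ≤ n - 1 →
      a i = (i + 1 : ℤ) * a (i + 1) - (i + 2 : ℤ) * a (i + 2)) :
    a 2 = B (n - 2) * a (n - 1) - (n : ℤ) * B (n - 3) * a n := by
  have aux : ∀ m, 2 ≤ m → m ≤ n - 1 →
      a 2 = B (m - 1) * a m - ((m : ℤ) + 1) * B (m - 2) * a (m + 1) := by
    intro m hm
    induction m, hm using Nat.le_induction with
    | base =>
      intro _
      simp [B]
    | succ m hm ih =>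
      intro hle
      have hih := ih (by omega)
      have hr := hrec m (by omega) (by omega)
      obtain ⟨k, rfl⟩ : ∃ k, m = k + 2 := ⟨m - 2, by omega⟩
      simp only [show k + 2 + 1 - 1 = k + 2 from rfl, show k + 2 + 1 - 2 = k + 1 from rfl,
        show k + 2 - 1 = k + 1 from rfl, show k + 2 - 2 = k from rfl] at *
      rw [hr] at hih
      rw [hih, show B (k + 2) = ((k : ℤ) + 3) * (B (k + 1) - B k) from rfl]
      push_cast
      ring
  have h := aux (n - 1) (by omega) (by omega)
  rw [show n - 1 - 1 = n - 2 from by omega, show n - 1 - 2 = n - 3 from by omega,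
    show n - 1 + 1 = n from by omega, show ((n - 1 : ℕ) : ℤ) + 1 = (n : ℤ) from by omega] at h
  exact h
end
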